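/- Let ψ be a Bernstein function with ψ(0) = 0, ψ(1) = 1 and ν((0,∞)) > 0, extended holomorphically to the closed right half-plane. Then for z ∈ ℂ with |z| ≤ 1, one has |1 − ψ(1 − z)| = 1 if and only if z = 1. (Claim in the proof of Theorem 5.1 of the paper.) -/

import Mathlib

/-! Since `ψ(1) = 1`, we have `1 - ψ(1 - z) = ψ(1) - ψ(1 - z) = b z + ∫ e^{-s} (e^{z s} - 1) dν(s)`.
For `‖z‖ ≤ 1`, `z ≠ 1` and `t > 0` one has `‖z‖ e^{t Re z} < e^t`, so integrating the derivative
of `t ↦ e^{z t}` over `[0, s]` gives `‖e^{z s} - 1‖ < e^s - 1`. Integrating this strict bound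
against the nonzero measure `ν` yields `‖1 - ψ(1 - z)‖ < b + ∫ (1 - e^{-s}) dν(s) = ψ(1) = 1`. -/

open MeasureTheory Filter Topology

noncomputable section

/-- Holomorphic extension of the Bernstein function (with `ψ(0) = 0`) to the closed right
half-plane: `ψ(z) = b z + ∫ (1 - e^{-z s}) dν(s)`. -/
def psiC (b : ℝ) (ν : Measure ℝ) (z : ℂ) : ℂ :=
  b * z + ∫ s in Set.Ioi (0 : ℝ), (1 - Complex.exp (-(z * (s : ℂ)))) ∂ν

open Set Complex

theorem setIntegral_lt_setIntegral_of_forall_lt {X : Type*} [MeasurableSpace X] {μ : Measure X}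
    {s : Set X} {f g : X → ℝ} (hs : MeasurableSet s) (hμs : μ s ≠ 0)
    (hf : IntegrableOn f s μ) (hg : IntegrableOn g s μ) (hlt : ∀ x ∈ s, f x < g x) :
    ∫ x in s, f x ∂μ < ∫ x in s, g x ∂μ := by
  rw [← sub_pos, ← integral_sub hg hf]
  change 0 < ∫ x in s, (g - f) x ∂μ
  rw [setIntegral_pos_iff_support_of_nonneg_ae _ (hg.sub hf)]
  · have hsupp : s ⊆ Function.support (g - f) := fun x hx => (sub_pos.2 (hlt x hx)).ne'
    rwa [inter_eq_self_of_subset_right hsupp, pos_iff_ne_zero]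
  · filter_upwards [ae_restrict_mem hs] with x hx using sub_nonneg.2 (hlt x hx).le

lemma norm_mul_exp_re_mul_lt_exp {z : ℂ} (hz : ‖z‖ ≤ 1) (hz1 : z ≠ 1) {t : ℝ} (ht : 0 < t) :
    ‖z‖ * Real.exp (z.re * t) < Real.exp t := by
  by_contra! h
  have hre : z.re ≤ ‖z‖ := re_le_norm z
  have hexp : Real.exp t ≤ Real.exp (z.re * t) :=
    h.trans (mul_le_of_le_one_left (Real.exp_pos _).le hz)
  have hre1 : 1 ≤ z.re := le_of_mul_le_mul_right (by simpa using Real.exp_le_exp.1 hexp) ht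
  have hre_eq : z.re = 1 := by linarith
  have him : z.im = 0 := abs_re_eq_norm.1 (by rw [hre_eq, abs_one]; linarith)
  exact hz1 (Complex.ext (by simp [hre_eq]) (by simp [him]))

lemma norm_cexp_mul_sub_one_lt {z : ℂ} (hz : ‖z‖ ≤ 1) (hz1 : z ≠ 1) {s : ℝ} (hs : 0 < s) :
    ‖cexp (z * s) - 1‖ < Real.exp s - 1 := by
  have hderiv (t : ℝ) : HasDerivAt (fun t : ℝ => cexp (z * t)) (cexp (z * t) * z) t := by
    simpa using (((hasDerivAt_id (t : ℂ)).const_mul z).comp_ofReal).cexp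
  have hcont : Continuous fun t : ℝ => cexp (z * t) * z := by fun_prop
  calc ‖cexp (z * s) - 1‖ = ‖∫ t in (0 : ℝ)..s, cexp (z * t) * z‖ := by
        rw [intervalIntegral.integral_eq_sub_of_hasDerivAt (fun t _ => hderiv t)
          (hcont.intervalIntegrable 0 s)]
        simp
    _ ≤ ∫ t in (0 : ℝ)..s, ‖z‖ * Real.exp (z.re * t) := by
        refine (intervalIntegral.norm_integral_le_integral_norm hs.le).trans_eq ?_
        refine intervalIntegral.integral_congr fun t _ => ?_
        simp [norm_exp, mul_comm]
    _ < ∫ t in (0 : ℝ)..s, Real.exp t :=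
        intervalIntegral.integral_lt_integral_of_continuousOn_of_le_of_exists_lt hs
          (by fun_prop) (by fun_prop)
          (fun t ht => (norm_mul_exp_re_mul_lt_exp hz hz1 ht.1).le)
          ⟨s, ⟨hs.le, le_rfl⟩, norm_mul_exp_re_mul_lt_exp hz hz1 hs⟩
    _ = Real.exp s - 1 := by simp

lemma norm_cexp_neg_one_sub_mul_sub_cexp_neg_lt {z : ℂ} (hz : ‖z‖ ≤ 1) (hz1 : z ≠ 1) {s : ℝ}
    (hs : 0 < s) : ‖cexp (-((1 - z) * s)) - cexp (-s)‖ < 1 - Real.exp (-s) := by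
  have hfactor : cexp (-((1 - z) * s)) - cexp (-s) = Real.exp (-s) * (cexp (z * s) - 1) := by
    rw [ofReal_exp, ofReal_neg, mul_sub, ← Complex.exp_add, mul_one]
    congr 2
    ring
  calc ‖cexp (-((1 - z) * s)) - cexp (-s)‖ = Real.exp (-s) * ‖cexp (z * s) - 1‖ := by
        rw [hfactor, norm_mul, norm_real, Real.norm_of_nonneg (Real.exp_pos _).le]
    _ < Real.exp (-s) * (Real.exp s - 1) :=
        mul_lt_mul_of_pos_left (norm_cexp_mul_sub_one_lt hz hz1 hs) (Real.exp_pos _)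
    _ = 1 - Real.exp (-s) := by rw [mul_sub, ← Real.exp_add, neg_add_cancel, Real.exp_zero, mul_one]

lemma one_sub_exp_neg_le_min (s : ℝ) : 1 - Real.exp (-s) ≤ min 1 s :=
  le_min (by linarith [Real.exp_pos (-s)]) (by linarith [Real.one_sub_le_exp_neg s])

lemma integrableOn_one_sub_exp_neg {ν : Measure ℝ}
    (hν : IntegrableOn (fun s => min 1 s) (Ioi 0) ν) :
    IntegrableOn (fun s => 1 - Real.exp (-s)) (Ioi 0) ν := by
  refine hν.mono' (by fun_prop) ?_
  filter_upwards [ae_restrict_mem measurableSet_Ioi] with s (hs : 0 < s)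
  rw [Real.norm_of_nonneg (sub_nonneg.2 (Real.exp_le_one_iff.2 (by linarith)))]
  exact one_sub_exp_neg_le_min s

lemma psiC_one (b : ℝ) (ν : Measure ℝ) :
    psiC b ν 1 = ↑(b + ∫ s in Ioi 0, (1 - Real.exp (-s)) ∂ν) := by
  rw [psiC, ofReal_add, ← integral_complex_ofReal]
  push_cast
  simp

lemma psiC_one_sub_psiC_one_sub {b : ℝ} {ν : Measure ℝ} {z : ℂ}
    (h1 : IntegrableOn (fun s => 1 - Real.exp (-s)) (Ioi 0) ν)
    (hd : IntegrableOn (fun s : ℝ => cexp (-((1 - z) * s)) - cexp (-s)) (Ioi 0) ν) :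
    psiC b ν 1 - psiC b ν (1 - z) =
      b * z + ∫ s in Ioi 0, (cexp (-((1 - z) * s)) - cexp (-s)) ∂ν := by
  have hsplit : ∫ s in Ioi 0, (1 - cexp (-((1 - z) * s))) ∂ν =
      ↑(∫ s in Ioi 0, (1 - Real.exp (-s)) ∂ν) -
        ∫ s in Ioi 0, (cexp (-((1 - z) * s)) - cexp (-s)) ∂ν := by
    have h1c : IntegrableOn (fun s : ℝ => ((1 - Real.exp (-s) : ℝ) : ℂ)) (Ioi 0) ν := h1.ofReal
    rw [← integral_complex_ofReal, ← integral_sub h1c hd]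
    congr 1 with s
    push_cast
    ring
  rw [psiC_one, psiC, hsplit]
  push_cast
  ring

lemma norm_psiC_one_sub_psiC_one_sub_lt {b : ℝ} (hb : 0 ≤ b) {ν : Measure ℝ}
    (hν : IntegrableOn (fun s => min 1 s) (Ioi 0) ν) (hν0 : ν (Ioi 0) ≠ 0)
    {z : ℂ} (hz : ‖z‖ ≤ 1) (hz1 : z ≠ 1) :
    ‖psiC b ν 1 - psiC b ν (1 - z)‖ < b + ∫ s in Ioi 0, (1 - Real.exp (-s)) ∂ν := by
  set d := fun s : ℝ => cexp (-((1 - z) * s)) - cexp (-s)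
  have hd_lt (s : ℝ) (hs : s ∈ Ioi 0) : ‖d s‖ < 1 - Real.exp (-s) :=
    norm_cexp_neg_one_sub_mul_sub_cexp_neg_lt hz hz1 hs
  have h1 := integrableOn_one_sub_exp_neg hν
  have hd : IntegrableOn d (Ioi 0) ν := h1.mono' (by fun_prop) <| by
    filter_upwards [ae_restrict_mem measurableSet_Ioi] with s hs using (hd_lt s hs).le
  rw [psiC_one_sub_psiC_one_sub h1 hd]
  calc ‖b * z + ∫ s in Ioi 0, d s ∂ν‖ ≤ b * ‖z‖ + ∫ s in Ioi 0, ‖d s‖ ∂ν := by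
        refine (norm_add_le _ _).trans (add_le_add ?_ (norm_integral_le_integral_norm _))
        rw [norm_mul, norm_real, Real.norm_of_nonneg hb]
    _ < b * 1 + ∫ s in Ioi 0, (1 - Real.exp (-s)) ∂ν :=
        add_lt_add_of_le_of_lt (mul_le_mul_of_nonneg_left hz hb)
          (setIntegral_lt_setIntegral_of_forall_lt measurableSet_Ioi hν0 hd.norm h1 hd_lt)
    _ = b + ∫ s in Ioi 0, (1 - Real.exp (-s)) ∂ν := by rw [mul_one]

/-- Claim in the proof of Theorem 5.1: if `ψ` is a Bernstein function with `ψ(0) = 0`,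
`ψ(1) = 1` and nonzero Lévy measure, then for `|z| ≤ 1` one has
`|1 - ψ(1 - z)| = 1` if and only if `z = 1`. -/
theorem abs_one_sub_psi_eq_one_iff
    (b : ℝ) (hb : 0 ≤ b) (ν : Measure ℝ)
    (hνfin : IntegrableOn (fun s => min 1 s) (Set.Ioi (0 : ℝ)) ν)
    (hν0 : ν (Set.Ioi (0 : ℝ)) ≠ 0)
    (hψ1 : b + ∫ s in Set.Ioi (0 : ℝ), (1 - Real.exp (-s)) ∂ν = 1)
    (z : ℂ) (hz : ‖z‖ ≤ 1) :
    ‖1 - psiC b ν (1 - z)‖ = 1 ↔ z = 1 := by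
  refine ⟨fun h => ?_, fun h => by simp [h, psiC]⟩
  by_contra hz1
  have hlt := norm_psiC_one_sub_psiC_one_sub_lt hb hνfin hν0 hz hz1
  rw [psiC_one, hψ1, ofReal_one, h] at hlt
  exact hlt.false
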